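/- arXiv:1711.04651 — 4 statements merged into one kernel-verified Lean document; each statement's English description precedes it below -/
import Mathlib

section
/- Suppose the rational function Φ(u) = α + Σ_{j=1}^l β_j/(u + ω_j) with α ≥ 0, β_j > 0, ω_j > 0, and suppose λ is a complex number with λ Φ(λ^2) = -1 and λ^2 ≠ -ω_j for all j. Then Re(λ) < 0. -/
lemma key_re (β ω : ℝ) (lam : ℂ) (hz : lam ^ 2 + (ω : ℂ) ≠ 0) :
    (lam * ((β : ℂ) / (lam ^ 2 + (ω : ℂ)))).re
      = β * (Complex.normSq lam + ω) / Complex.normSq (lam ^ 2 + (ω : ℂ)) * lam.re := by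
  have hN : Complex.normSq (lam ^ 2 + (ω : ℂ)) ≠ 0 := by
    simpa [Complex.normSq_eq_zero] using hz
  simp only [Complex.mul_re, Complex.div_re, Complex.div_im, Complex.normSq_apply,
    Complex.add_re, Complex.add_im, Complex.ofReal_re, Complex.ofReal_im, pow_two,
    Complex.mul_re, Complex.mul_im]
  have hN' : (lam.re * lam.re - lam.im * lam.im + ω) * (lam.re * lam.re - lam.im * lam.im + ω)
      + (lam.re * lam.im + lam.im * lam.re) * (lam.re * lam.im + lam.im * lam.re) ≠ 0 := by
    simpa [Complex.normSq_apply, Complex.add_re, Complex.add_im, pow_two,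
      Complex.mul_re, Complex.mul_im, Complex.ofReal_re, Complex.ofReal_im] using hN
  field_simp
  ring

/-- If `Φ(u) = α + ∑ β j / (u + ω j)` with `α ≥ 0`, `β j > 0`, `ω j > 0`, and
`lam` is a complex number with `lam * Φ(lam^2) = -1` (and `lam^2` is not a pole),
then `Re lam < 0`. -/
theorem re_neg_of_root (l : ℕ) (α : ℝ) (β ω : Fin l → ℝ) (hα : 0 ≤ α)
    (hβ : ∀ j, 0 < β j) (hω : ∀ j, 0 < ω j) (lam : ℂ)
    (hpole : ∀ j, lam ^ 2 ≠ -(ω j : ℂ))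
    (heq : lam * ((α : ℂ) + ∑ j, (β j : ℂ) / (lam ^ 2 + (ω j : ℂ))) = -1) :
    lam.re < 0 := by
  have hz : ∀ j, lam ^ 2 + (ω j : ℂ) ≠ 0 := by
    intro j h
    exact hpole j (by linear_combination h)
  set f : Fin l → ℝ := fun j =>
    β j * (Complex.normSq lam + ω j) / Complex.normSq (lam ^ 2 + (ω j : ℂ)) with hf
  have hre : (α + ∑ j, f j) * lam.re = -1 := by
    have := congrArg Complex.re heq
    rw [mul_add, Finset.mul_sum] at this
    simp only [Complex.add_re, Complex.neg_re, Complex.one_re, Complex.re_sum] at this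
    rw [Finset.sum_congr rfl (fun j _ => key_re (β j) (ω j) lam (hz j))] at this
    rw [← Finset.sum_mul] at this
    have hα' : (lam * (α : ℂ)).re = α * lam.re := by
      simp [Complex.mul_re, mul_comm]
    rw [hα'] at this
    linarith [this]
  have hc : 0 ≤ α + ∑ j, f j := by
    apply add_nonneg hα
    apply Finset.sum_nonneg
    intro j _
    apply div_nonneg
    · have := Complex.normSq_nonneg lam
      nlinarith [(hβ j).le, (hω j).le]
    · exact Complex.normSq_nonneg _
  by_contra h
  push_neg at h
  nlinarith [mul_nonneg hc h]
end

section
/- Let g(u) = g_0 u^l + ... + g_l with g_0 ≠ 0, and let T_r be the r×(r+l) banded matrix with rows equal to shifted copies of (g_0, ..., g_l). Then every minor of T_r of order s < r formed from s consecutive rows i, i+1, ..., i+s-1 and columns j_1 < ... < j_s is either zero (when i > j_1) or equals g_0^{-(r-s)} times a minor of order r of T_r that includes an initial identity-like block. -/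
/-- The banded matrix with rows equal to shifted copies of the sequence `g`:
entry `(i, j)` (0-based) is `g (j - i)` for `i ≤ j` and `0` otherwise.  The
matrix `T_r` of the paper is its restriction to rows `0, ..., r-1` and columns
`0, ..., r+l-1`; since `g k = 0` for `k > l`, entries outside that column range
vanish. -/
def Tband (g : ℕ → ℝ) : ℕ → ℕ → ℝ := fun i j => if i ≤ j then g (j - i) else 0

/-- Block-triangular computation: if the first `m` columns of an `r×r` matrix
are the corresponding columns of `Tband g`, and the lower-right `s×s` block is
`D`, then the determinant equals `g 0 ^ m * D.det`. -/
lemma Tband_det_aux (g : ℕ → ℝ) (m s r : ℕ) (hmr : m + s = r)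
    (M : Matrix (Fin r) (Fin r) ℝ)
    (h1 : ∀ u v : Fin r, (v : ℕ) < m → M u v = Tband g u v)
    (D : Matrix (Fin s) (Fin s) ℝ)
    (h2 : ∀ (u v : Fin r) (hu : m ≤ (u : ℕ)) (hv : m ≤ (v : ℕ)),
      M u v = D ⟨(u : ℕ) - m, by omega⟩ ⟨(v : ℕ) - m, by omega⟩) :
    M.det = g 0 ^ m * D.det := by
  set e : Fin m ⊕ Fin s ≃ Fin r := finSumFinEquiv.trans (finCongr hmr) with he
  rw [← Matrix.det_submatrix_equiv_self e M]
  have hblock : M.submatrix e e =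
      Matrix.fromBlocks (Matrix.of fun u v : Fin m => Tband g u v)
        (M.submatrix (e ∘ Sum.inl) (e ∘ Sum.inr)) 0 D := by
    ext u v
    have heL : ∀ x : Fin m, ((e (Sum.inl x) : Fin r) : ℕ) = (x : ℕ) := by
      intro x; simp [he]
    have heR : ∀ x : Fin s, ((e (Sum.inr x) : Fin r) : ℕ) = m + (x : ℕ) := by
      intro x; simp [he]
    cases u with
    | inl u =>
      cases v with
      | inl v =>
        simp only [Matrix.submatrix_apply, Matrix.fromBlocks_apply₁₁, Matrix.of_apply]
        rw [h1 _ _ (by rw [heL]; exact v.isLt)]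
        simp [Tband, heL]
      | inr v =>
        simp [Matrix.submatrix_apply, Matrix.fromBlocks_apply₁₂]
    | inr u =>
      cases v with
      | inl v =>
        simp only [Matrix.submatrix_apply, Matrix.fromBlocks_apply₂₁, Matrix.zero_apply]
        rw [h1 _ _ (by rw [heL]; exact v.isLt)]
        simp only [Tband, heL, heR]
        rw [if_neg (by have := v.isLt; omega)]
      | inr v =>
        simp only [Matrix.submatrix_apply, Matrix.fromBlocks_apply₂₂]
        rw [h2 _ _ (by rw [heR]; omega) (by rw [heR]; omega)]
        congr 1 <;> ext <;> simp [heR]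
    
  rw [hblock, Matrix.det_fromBlocks_zero₂₁]
  congr 1
  have htri : (Matrix.of fun u v : Fin m => Tband g u v).BlockTriangular id := by
    intro u v huv
    simp only [Matrix.of_apply, Tband]
    rw [if_neg]
    exact fun h => absurd (Fin.le_def.mpr h) (not_le.mpr huv)
  rw [Matrix.det_of_upperTriangular htri]
  simp [Tband]

/-- Minors of `T_r` of order `s < r` formed from `s` consecutive rows
`i, ..., i+s-1` and columns `c 0 < ... < c (s-1)`: such a minor vanishes when
`c 0 < i`, and when `i ≤ c 0` it equals `g₀^{-(r-s)}` times the minor of order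
`r` of `T_r` with rows `0, ..., r-1` and columns
`0, ..., i+t-1, c 0 + t, ..., c (s-1) + t`, where `t = r - i - s`
(0-based version of the paper's `t = r + 1 - i - s`). -/
theorem Tr_consecutive_minors (l r s : ℕ) (g : ℕ → ℝ) (hg0 : g 0 ≠ 0)
    (hgl : ∀ k, l < k → g k = 0) (hs : 0 < s) (hsr : s < r)
    (i : ℕ) (his : i + s ≤ r) (c : Fin s → ℕ) (hc : StrictMono c)
    (hcr : ∀ j, c j < r + l) :
    (c ⟨0, hs⟩ < i →
      (Matrix.of fun u v : Fin s => Tband g (i + (u : ℕ)) (c v)).det = 0) ∧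
    (i ≤ c ⟨0, hs⟩ →
      (Matrix.of fun u v : Fin s => Tband g (i + (u : ℕ)) (c v)).det =
        ((g 0) ^ (r - s))⁻¹ *
          (Matrix.of fun u v : Fin r =>
            Tband g (u : ℕ)
              (if h : (v : ℕ) < i + (r - i - s) then (v : ℕ)
               else c ⟨(v : ℕ) - (i + (r - i - s)), by
                  have := v.isLt; omega⟩ + (r - i - s))).det) := by
  constructor
  · intro h
    apply Matrix.det_eq_zero_of_column_eq_zero ⟨0, hs⟩
    intro u
    simp only [Matrix.of_apply, Tband]
    rw [if_neg (by omega)]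
  · intro h
    have hmr : (i + (r - i - s)) + s = r := by omega
    rw [Tband_det_aux g (i + (r - i - s)) s r hmr _
      (fun u v hv => by simp only [Matrix.of_apply]; rw [dif_pos hv])
      (Matrix.of fun u v : Fin s => Tband g (i + (u : ℕ)) (c v))
      (fun u v hu hv => by
        simp only [Matrix.of_apply]
        rw [dif_neg (by omega)]
        simp only [Tband]
        by_cases hcase : i + ((u : ℕ) - (i + (r - i - s))) ≤ c ⟨(v : ℕ) - (i + (r - i - s)), by have := v.isLt; omega⟩
        · rw [if_pos (by omega), if_pos hcase]
          congr 1
          omega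
        · rw [if_neg (by omega), if_neg hcase])]
    have hrs : r - s = i + (r - i - s) := by omega
    rw [hrs, inv_mul_cancel_left₀ (pow_ne_zero _ hg0)]
end

section
/- Let p(z) = q(z) g(z^2) where deg q = m, deg g = (n-m)/2, q(0) ≠ 0, and the finite Hurwitz matrix H_m(q) of q is nonsingular. Then the n×n finite Hurwitz matrix H_n(p) has rank exactly (n+m)/2. -/
/-! Write `n = m + 2k` with `m = deg q`, `k = deg g`. Comparing coefficients in `p = q · g(z²)`
gives the factorization `H_n(p) = H_n(q) T_n(g)`, where `T_n(g)` is upper triangular with the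
leading coefficient of `g` on its diagonal; hence `rank H_n(p) = rank H_n(q)`. The last `k` columns
of `H_n(q)` vanish, so its rank is at most `m + k`. Conversely, on the rows
`0, …, m-1, m+1, m+3, …, m+2k-1` and the columns `0, …, m+k-1`, the matrix `H_n(q)` is block lower
triangular with diagonal blocks `H_m(q)` and a lower triangular matrix with diagonal `q(0)`, so
this minor is `det H_m(q) · q(0)^k ≠ 0`. -/

/-- The finite Hurwitz matrix of a real polynomial `p` of degree `n`: with
`a k := p.coeff (n - k)` for `0 ≤ k ≤ n` (so `p(z) = a 0 * z^n + ... + a n`)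
and `a k := 0` otherwise, the entry `(i, j)` (0-based) is `a (2j - i + 1)`. -/
noncomputable def HurwitzOfPoly (p : Polynomial ℝ) :
    Matrix (Fin p.natDegree) (Fin p.natDegree) ℝ := fun i j =>
  if h : 0 ≤ 2 * (j : ℤ) - (i : ℤ) + 1 ∧ 2 * (j : ℤ) - (i : ℤ) + 1 ≤ (p.natDegree : ℤ)
  then p.coeff (p.natDegree - (2 * (j : ℤ) - (i : ℤ) + 1).toNat) else 0

open Polynomial Matrix Finset

theorem Int.sum_range_eq_finsum {M : Type*} [AddCommMonoid M] {F : ℤ → M} (a : ℤ) (N : ℕ)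
    (hF : ∀ u, F u ≠ 0 → a ≤ u ∧ u < a + N) : ∑ l ∈ Finset.range N, F (a + l) = ∑ᶠ u, F u := by
  rw [finsum_eq_sum_of_support_subset F (s := Ico a (a + N)) fun u hu => by simpa using hF u hu,
    Int.Ico_eq_finset_map, sum_map, add_sub_cancel_left, Int.toNat_natCast]
  rfl

theorem Matrix.rank_le_card_of_forall_col_eq_zero {m n K : Type*} [Fintype n] [DecidableEq n]
    [Field K] (A : Matrix m n K) (s : Finset n) (h : ∀ i, ∀ j ∉ s, A i j = 0) : A.rank ≤ #s := by
  classical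
  have hA : A = A * diagonal fun j => if j ∈ s then (1 : K) else 0 := by
    ext i j
    by_cases hj : j ∈ s <;> simp [hj, h i j]
  calc A.rank = _ := congrArg rank hA
    _ ≤ _ := rank_mul_le_right _ _
    _ = #s := by simp [rank_diagonal, Fintype.card_subtype]

namespace Polynomial

section Semiring

variable {R : Type*} [Semiring R]

/-- The coefficient of `X ^ t`, read as `0` for negative `t` (not as the coefficient of `X ^ 0`,
which is what `f.coeff t.toNat` would give). -/
def intCoeff (f : R[X]) (t : ℤ) : R := if 0 ≤ t then f.coeff t.toNat else 0

theorem intCoeff_of_neg (f : R[X]) {t : ℤ} (ht : t < 0) : f.intCoeff t = 0 :=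
  if_neg ht.not_ge

@[simp]
theorem intCoeff_natCast (f : R[X]) (n : ℕ) : f.intCoeff n = f.coeff n := by
  simp [intCoeff]

theorem intCoeff_of_natDegree_lt (f : R[X]) {t : ℤ} (ht : f.natDegree < t) :
    f.intCoeff t = 0 := by
  lift t to ℕ using by omega
  exact (f.intCoeff_natCast t).trans (coeff_eq_zero_of_natDegree_lt (by omega))

theorem nonneg_and_le_natDegree_of_intCoeff_ne_zero {f : R[X]} {t : ℤ} (h : f.intCoeff t ≠ 0) :
    0 ≤ t ∧ t ≤ f.natDegree := by
  by_contra! ht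
  by_cases h0 : 0 ≤ t
  · exact h (f.intCoeff_of_natDegree_lt (ht h0))
  · exact h (f.intCoeff_of_neg (not_le.1 h0))

theorem comp_X_pow_eq_sum (g : R[X]) (k : ℕ) :
    g.comp (X ^ k) = ∑ s ∈ range (g.natDegree + 1), C (g.coeff s) * X ^ (k * s) := by
  conv_lhs => rw [g.as_sum_range' (g.natDegree + 1) (lt_add_one _)]
  rw [sum_comp]
  exact sum_congr rfl fun s _ => by rw [monomial_comp, ← pow_mul]

theorem intCoeff_mul_comp_X_sq (q g : R[X]) (t : ℤ) :
    (q * g.comp (X ^ 2)).intCoeff t = ∑ᶠ u : ℤ, q.intCoeff (t - 2 * u) * g.intCoeff u := by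
  rw [← Int.sum_range_eq_finsum 0 (g.natDegree + 1) fun u hu => by
    have := nonneg_and_le_natDegree_of_intCoeff_ne_zero (right_ne_zero_of_mul hu); omega]
  rcases lt_or_ge t 0 with ht | ht
  · rw [intCoeff_of_neg _ ht]
    exact (sum_eq_zero fun s _ => by rw [intCoeff_of_neg _ (by omega), zero_mul]).symm
  lift t to ℕ using ht
  rw [intCoeff_natCast, comp_X_pow_eq_sum, mul_sum, finsetSum_coeff]
  refine sum_congr rfl fun s _ => ?_
  rw [← mul_assoc, coeff_mul_X_pow', coeff_mul_C, zero_add, intCoeff_natCast]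
  split_ifs with h
  · rw [show (t : ℤ) - 2 * s = (t - 2 * s : ℕ) by omega, intCoeff_natCast]
  · rw [intCoeff_of_neg _ (by omega), zero_mul]

/-- `H_n(q)`, the leading `n × n` block of the infinite Hurwitz matrix of `q`; `HurwitzOfPoly` is
the case `n = deg q`. -/
def hurwitzMatrix (q : R[X]) (n : ℕ) : Matrix (Fin n) (Fin n) R :=
  fun i j => q.intCoeff (q.natDegree + i - 2 * j - 1)

/-- `T_n(g)`: entry `(i, j)` is `g_{j-i}`, coefficients being numbered from the leading one. -/
def toeplitzMatrix (g : R[X]) (n : ℕ) : Matrix (Fin n) (Fin n) R :=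
  fun i j => g.intCoeff (g.natDegree + i - j)

theorem toeplitzMatrix_isUpperTriangular (g : R[X]) (n : ℕ) :
    (g.toeplitzMatrix n).IsUpperTriangular := fun i j hij =>
  g.intCoeff_of_natDegree_lt (by simp only [id] at hij; omega)

def hurwitzMinorRows (m k : ℕ) : Fin m ⊕ Fin k → Fin (m + 2 * k) :=
  Sum.elim (Fin.castLE (by omega)) fun s => ⟨m + 2 * s + 1, by omega⟩

def hurwitzMinorCols (m k : ℕ) : Fin m ⊕ Fin k → Fin (m + 2 * k) :=
  Sum.elim (Fin.castLE (by omega)) fun t => ⟨m + t, by omega⟩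

end Semiring

section CommRing

variable {R : Type*} [CommRing R]

theorem det_toeplitzMatrix (g : R[X]) (n : ℕ) :
    (g.toeplitzMatrix n).det = g.leadingCoeff ^ n := by
  simp [det_of_isUpperTriangular (g.toeplitzMatrix_isUpperTriangular n), toeplitzMatrix]

theorem det_hurwitzMatrix_submatrix (q : R[X]) (k : ℕ) :
    ((q.hurwitzMatrix (q.natDegree + 2 * k)).submatrix (hurwitzMinorRows q.natDegree k)
      (hurwitzMinorCols q.natDegree k)).det =
      (q.hurwitzMatrix q.natDegree).det * q.coeff 0 ^ k := by
  set S := (q.hurwitzMatrix (q.natDegree + 2 * k)).submatrix (hurwitzMinorRows q.natDegree k)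
    (hurwitzMinorCols q.natDegree k)
  have h₁₁ : S.toBlocks₁₁ = q.hurwitzMatrix q.natDegree := by
    ext i j
    simp [S, toBlocks₁₁, hurwitzMatrix, hurwitzMinorRows, hurwitzMinorCols]
  have h₁₂ : S.toBlocks₁₂ = 0 := by
    ext i t
    exact q.intCoeff_of_neg (by simp [hurwitzMinorRows, hurwitzMinorCols]; omega)
  have h₂₂ : S.toBlocks₂₂.IsLowerTriangular := fun s t hst =>
    q.intCoeff_of_neg (by simp [hurwitzMinorRows, hurwitzMinorCols] at hst ⊢; omega)
  have hdiag : ∀ s, S.toBlocks₂₂ s s = q.coeff 0 := fun s => by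
    rw [← q.intCoeff_natCast 0]
    simp [S, toBlocks₂₂, hurwitzMatrix, hurwitzMinorRows, hurwitzMinorCols]
    congr 1
    ring
  rw [← fromBlocks_toBlocks S, h₁₂, det_fromBlocks_zero₁₂, h₁₁, det_of_isLowerTriangular _ h₂₂]
  simp only [hdiag, prod_const, card_univ, Fintype.card_fin]

variable [IsDomain R]

theorem natDegree_mul_comp_X_sq {q g : R[X]} (hq : q ≠ 0) (hg : g ≠ 0) :
    (q * g.comp (X ^ 2)).natDegree = q.natDegree + 2 * g.natDegree := by
  have hg2 : g.comp (X ^ 2) ≠ 0 := by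
    rwa [← expand_eq_comp_X_pow, Ne, expand_eq_zero two_pos]
  rw [natDegree_mul hq hg2, natDegree_comp, natDegree_X_pow, mul_comm]

theorem hurwitzMatrix_mul_comp_X_sq {q g : R[X]} (hq : q ≠ 0) (hg : g ≠ 0) (n : ℕ) :
    (q * g.comp (X ^ 2)).hurwitzMatrix n = q.hurwitzMatrix n * g.toeplitzMatrix n := by
  ext i j
  simp only [hurwitzMatrix, toeplitzMatrix, mul_apply]
  rw [natDegree_mul_comp_X_sq hq hg, intCoeff_mul_comp_X_sq,
    ← Int.sum_range_eq_finsum (g.natDegree - j) n fun u hu => ?_, ← Fin.sum_univ_eq_sum_range]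
  · refine Fintype.sum_congr _ _ fun l => ?_
    congr 2 <;> push_cast <;> ring
  · have hq' := nonneg_and_le_natDegree_of_intCoeff_ne_zero (left_ne_zero_of_mul hu)
    have hg' := nonneg_and_le_natDegree_of_intCoeff_ne_zero (right_ne_zero_of_mul hu)
    omega

end CommRing

section Field

variable {K : Type*} [Field K]

theorem rank_hurwitzMatrix_le (q : K[X]) (n : ℕ) :
    (q.hurwitzMatrix n).rank ≤ (n + q.natDegree) / 2 :=
  calc _ ≤ #{j : Fin n | j < (n + q.natDegree) / 2} :=
        rank_le_card_of_forall_col_eq_zero _ _ fun i j hj =>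
          q.intCoeff_of_neg (by simp at hj; omega)
    _ ≤ _ := by rw [Fin.card_filter_val_lt]; exact min_le_right _ _

theorem le_rank_hurwitzMatrix {q : K[X]} (hq0 : q.coeff 0 ≠ 0)
    (hH : (q.hurwitzMatrix q.natDegree).det ≠ 0) (k : ℕ) :
    q.natDegree + k ≤ (q.hurwitzMatrix (q.natDegree + 2 * k)).rank :=
  calc q.natDegree + k = Fintype.card (Fin q.natDegree ⊕ Fin k) := by simp
    _ = _ := (rank_of_det_ne_zero (by
        rw [det_hurwitzMatrix_submatrix]; exact mul_ne_zero hH (pow_ne_zero _ hq0))).symm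
    _ ≤ _ := rank_submatrix_le _ _ _

end Field

end Polynomial

theorem hurwitzOfPoly_eq_hurwitzMatrix (p : ℝ[X]) :
    HurwitzOfPoly p = p.hurwitzMatrix p.natDegree := by
  ext i j
  rw [HurwitzOfPoly, hurwitzMatrix, intCoeff]
  split_ifs with h₁ h₂ h₂
  · congr 1; omega
  · omega
  · exact (coeff_eq_zero_of_natDegree_lt (by omega)).symm
  · rfl

/-- If `p(z) = q(z) * g(z^2)` with `q(0) ≠ 0` and the finite Hurwitz matrix of
`q` nonsingular, then the finite Hurwitz matrix of `p` has rank exactly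
`(n + m)/2`, where `n = deg p` and `m = deg q`. -/
theorem hurwitz_rank (q g : Polynomial ℝ) (hq : q ≠ 0) (hgne : g ≠ 0)
    (hq0 : q.coeff 0 ≠ 0) (hHq : (HurwitzOfPoly q).det ≠ 0) :
    (HurwitzOfPoly (q * g.comp (Polynomial.X ^ 2))).rank =
      ((q * g.comp (Polynomial.X ^ 2)).natDegree + q.natDegree) / 2 := by
  have hT : ∀ n, (g.toeplitzMatrix n).det ≠ 0 := fun n => by
    rw [det_toeplitzMatrix]
    exact pow_ne_zero n (leadingCoeff_ne_zero.2 hgne)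
  rw [hurwitzOfPoly_eq_hurwitzMatrix] at hHq ⊢
  rw [hurwitzMatrix_mul_comp_X_sq hq hgne, rank_mul_eq_left_of_det_ne_zero _ _ (hT _),
    natDegree_mul_comp_X_sq hq hgne]
  have := le_rank_hurwitzMatrix hq0 hHq g.natDegree
  exact le_antisymm (rank_hurwitzMatrix_le _ _) (by omega)
end

section
/- A quadratic polynomial g(u) = (u + c e^{iθ})(u + c e^{-iθ}) = u^2 + 2c cos(θ) u + c^2 with c > 0 and 0 ≤ θ ≤ π belongs to the class PF_2 (all minors of order ≤ 2 of its Toeplitz matrix are nonnegative) if and only if 0 ≤ θ ≤ π/3. -/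
/-- Extension of a sequence by zero to negative integer indices. -/
def extZ (a : ℕ → ℝ) : ℤ → ℝ := fun k => if 0 ≤ k then a k.toNat else 0

/-- The infinite upper triangular Toeplitz matrix of the sequence `g`. -/
def Toep (g : ℕ → ℝ) : ℕ → ℕ → ℝ := fun i j => extZ g ((j : ℤ) - (i : ℤ))

/-- The coefficient sequence `(1, 2c cos θ, c², 0, 0, ...)` of
`g(u) = (u + c e^{iθ})(u + c e^{-iθ}) = u² + 2c cos θ · u + c²`. -/
noncomputable def quadSeq (c θ : ℝ) : ℕ → ℝ := fun k =>
  if k = 0 then 1 else if k = 1 then 2 * c * Real.cos θ else if k = 2 then c ^ 2 else 0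

lemma extZ_quad (c θ : ℝ) (z : ℤ) : extZ (quadSeq c θ) z =
    if z = 0 then 1 else if z = 1 then 2 * c * Real.cos θ else if z = 2 then c ^ 2 else 0 := by
  unfold extZ quadSeq
  rcases le_or_gt 0 z with h | h
  · rw [if_pos h]
    have : (z.toNat : ℤ) = z := Int.toNat_of_nonneg h
    split_ifs <;> first | rfl | omega
  · rw [if_neg (by omega)]
    split_ifs <;> first | rfl | omega

lemma extZ_quad_nonneg (c θ : ℝ) (hc : 0 ≤ c) (hcos : 0 ≤ Real.cos θ) (z : ℤ) :
    0 ≤ extZ (quadSeq c θ) z := by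
  rw [extZ_quad]
  split_ifs
  · norm_num
  · positivity
  · positivity
  · exact le_rfl

lemma extZ_quad_zero (c θ : ℝ) (z : ℤ) (h : z < 0 ∨ 2 < z) : extZ (quadSeq c θ) z = 0 := by
  rw [extZ_quad, if_neg (by omega), if_neg (by omega), if_neg (by omega)]

/-- `g(u) = (u + c e^{iθ})(u + c e^{-iθ})` with `c > 0`, `0 ≤ θ ≤ π`, belongs
to the class `PF₂` (all minors of order at most 2 of its Toeplitz matrix are
nonnegative) iff `0 ≤ θ ≤ π/3`. -/
theorem quadratic_PF2 (c θ : ℝ) (hc : 0 < c) (hθ0 : 0 ≤ θ) (hθπ : θ ≤ Real.pi) :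
    (∀ (k : ℕ), k ≤ 2 → ∀ (r col : Fin k → ℕ), StrictMono r → StrictMono col →
        0 ≤ (Matrix.of fun u v => Toep (quadSeq c θ) (r u) (col v)).det) ↔
      θ ≤ Real.pi / 3 := by
  have hπ3 : Real.cos (Real.pi / 3) = 1 / 2 := Real.cos_pi_div_three
  constructor
  · intro h
    have sm1 : ∀ f : Fin 1 → ℕ, StrictMono f := fun f a b hab => absurd hab (by omega)
    have h1 := h 1 (by norm_num) (fun _ => 0) (fun _ => 1) (sm1 _) (sm1 _)
    have h2 := h 2 le_rfl ![0, 1] ![1, 2] (by decide) (by decide)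
    rw [Matrix.det_fin_one] at h1
    rw [Matrix.det_fin_two] at h2
    simp only [Matrix.of_apply, Toep, Matrix.cons_val_zero, Matrix.cons_val_one,
      Matrix.head_cons] at h1 h2
    rw [show ((1:ℕ):ℤ) - ((0:ℕ):ℤ) = 1 by norm_num] at h1
    rw [extZ_quad] at h1
    norm_num at h1
    rw [show ((1:ℕ):ℤ) - ((0:ℕ):ℤ) = 1 by norm_num,
        show ((2:ℕ):ℤ) - ((1:ℕ):ℤ) = 1 by norm_num,
        show ((2:ℕ):ℤ) - ((0:ℕ):ℤ) = 2 by norm_num,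
        show ((1:ℕ):ℤ) - ((1:ℕ):ℤ) = 0 by norm_num] at h2
    simp only [extZ_quad] at h2
    norm_num at h2
    -- h1 : 0 ≤ 2*c*cos θ, h2 : c^2 ≤ 2*c*cos θ * (2*c*cos θ)
    have hcosθ0 : 0 ≤ Real.cos θ := by nlinarith
    have hcos2 : 1 / 2 ≤ Real.cos θ := by
      by_contra hlt
      push_neg at hlt
      have hq : Real.cos θ ^ 2 < 1 / 4 := by nlinarith
      have hkey : 0 < c * c * (1 / 4 - Real.cos θ ^ 2) :=
        mul_pos (mul_pos hc hc) (by linarith)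
      nlinarith
    by_contra hgt
    push_neg at hgt
    have := Real.cos_lt_cos_of_nonneg_of_le_pi (by positivity) hθπ hgt
    rw [hπ3] at this
    linarith
  · intro hθ k hk r col hr hcol
    have hcos : 1 / 2 ≤ Real.cos θ := by
      have := Real.cos_le_cos_of_nonneg_of_le_pi hθ0 (by linarith [Real.pi_pos]) hθ
      rwa [hπ3] at this
    have hcos0 : 0 ≤ Real.cos θ := by linarith
    interval_cases k
    · simp [Matrix.det_fin_zero]
    · rw [Matrix.det_fin_one]
      exact extZ_quad_nonneg c θ hc.le hcos0 _
    · rw [Matrix.det_fin_two]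
      simp only [Matrix.of_apply, Toep]
      have hr01 : r 0 < r 1 := hr (by decide)
      have hc01 : col 0 < col 1 := hcol (by decide)
      set x : ℤ := (col 0 : ℤ) - (r 1 : ℤ) with hxdef
      set y : ℤ := (col 1 : ℤ) - (r 0 : ℤ) with hydef
      set m : ℤ := (col 0 : ℤ) - (r 0 : ℤ) with hmdef
      set n : ℤ := (col 1 : ℤ) - (r 1 : ℤ) with hndef
      by_cases hmain : (0 ≤ x ∧ x ≤ 2) ∧ (0 ≤ y ∧ y ≤ 2)
      · -- forces x = 0, y = 2, m = n = 1
        have hx0 : x = 0 := by omega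
        have hy2 : y = 2 := by omega
        have hm1 : m = 1 := by omega
        have hn1 : n = 1 := by omega
        rw [hm1, hn1, hx0, hy2]
        simp only [extZ_quad]
        norm_num
        have hkey : c ≤ 2 * c * Real.cos θ := by nlinarith
        nlinarith [mul_nonneg (sub_nonneg.mpr hkey) (by linarith : (0:ℝ) ≤ 2 * c * Real.cos θ + c)]
      · have hzero : extZ (quadSeq c θ) y * extZ (quadSeq c θ) x = 0 := by
          rcases not_and_or.mp hmain with h | h
          · rw [extZ_quad_zero c θ x (by omega), mul_zero]
          · rw [extZ_quad_zero c θ y (by omega), zero_mul]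
        rw [hzero, sub_zero]
        exact mul_nonneg (extZ_quad_nonneg c θ hc.le hcos0 _)
          (extZ_quad_nonneg c θ hc.le hcos0 _)
end
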